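/- arXiv:1010.2106 — 4 statements merged into one kernel-verified Lean document; each statement's English description precedes it below -/
import Mathlib

section
/- The one-dimensional Skorokhod map Γ₁ is Lipschitz with constant 2 in the uniform norm on [0,T]: for continuous ψ₁, ψ₂ : [0,T] → ℝ, sup_{t∈[0,T]} |Γ₁(ψ₁)(t) − Γ₁(ψ₂)(t)| ≤ 2 sup_{t∈[0,T]} |ψ₁(t) − ψ₂(t)|. -/
open Set

/-- The one-dimensional Skorokhod map:
`Γ₁(ψ)(t) = ψ(t) + sup_{s ∈ [0,t]} max (-ψ(s)) 0`. -/
noncomputable def Gamma1 (ψ : ℝ → ℝ) (t : ℝ) : ℝ :=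
  ψ t + sSup ((fun s => max (-ψ s) 0) '' Icc 0 t)

private lemma sSup_sub_le (f g : ℝ → ℝ) (hf : Continuous f) (hg : Continuous g)
    (t M : ℝ) (ht : 0 ≤ t) (hM : ∀ s ∈ Icc (0:ℝ) t, f s ≤ g s + M) :
    sSup (f '' Icc 0 t) ≤ sSup (g '' Icc 0 t) + M := by
  apply csSup_le ((nonempty_Icc.2 ht).image f)
  rintro x ⟨s, hs, rfl⟩
  calc f s ≤ g s + M := hM s hs
    _ ≤ sSup (g '' Icc 0 t) + M := by
        gcongr
        exact le_csSup (isCompact_Icc.bddAbove_image hg.continuousOn)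
          (mem_image_of_mem g hs)

/-- The one-dimensional Skorokhod map is Lipschitz with constant `2` in the
uniform norm on `[0,T]`. -/
theorem stmt3 (T : ℝ) (hT : 0 < T) (ψ₁ ψ₂ : ℝ → ℝ)
    (h1 : Continuous ψ₁) (h2 : Continuous ψ₂) :
    sSup ((fun t => |Gamma1 ψ₁ t - Gamma1 ψ₂ t|) '' Icc 0 T) ≤
      2 * sSup ((fun t => |ψ₁ t - ψ₂ t|) '' Icc 0 T) := by
  set M := sSup ((fun t => |ψ₁ t - ψ₂ t|) '' Icc 0 T) with hMdef
  have hcont : Continuous fun t => |ψ₁ t - ψ₂ t| := (h1.sub h2).abs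
  have hM : ∀ s ∈ Icc (0:ℝ) T, |ψ₁ s - ψ₂ s| ≤ M := fun s hs =>
    le_csSup (isCompact_Icc.bddAbove_image hcont.continuousOn)
      (mem_image_of_mem _ hs)
  have hM0 : 0 ≤ M := le_trans (abs_nonneg _) (hM 0 ⟨le_refl 0, hT.le⟩)
  apply Real.sSup_le _ (by linarith)
  rintro x ⟨t, ht, rfl⟩
  have hsub : Icc (0:ℝ) t ⊆ Icc 0 T := Icc_subset_Icc le_rfl ht.2
  have key : ∀ s ∈ Icc (0:ℝ) t,
      |max (-ψ₁ s) 0 - max (-ψ₂ s) 0| ≤ M := fun s hs => by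
    calc |max (-ψ₁ s) 0 - max (-ψ₂ s) 0| ≤ |(-ψ₁ s) - (-ψ₂ s)| :=
          abs_max_sub_max_le_abs _ _ _
      _ = |ψ₁ s - ψ₂ s| := by rw [← abs_neg]; ring_nf
      _ ≤ M := hM s (hsub hs)
  have c1 : Continuous fun s => max (-ψ₁ s) 0 := h1.neg.max continuous_const
  have c2 : Continuous fun s => max (-ψ₂ s) 0 := h2.neg.max continuous_const
  have d1 := sSup_sub_le _ _ c1 c2 t M ht.1 fun s hs => by
    have := key s hs; rw [abs_sub_le_iff] at this; linarith [this.1]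
  have d2 := sSup_sub_le _ _ c2 c1 t M ht.1 fun s hs => by
    have := key s hs; rw [abs_sub_le_iff] at this; linarith [this.2]
  have hS : |sSup ((fun s => max (-ψ₁ s) 0) '' Icc 0 t) -
      sSup ((fun s => max (-ψ₂ s) 0) '' Icc 0 t)| ≤ M := by
    rw [abs_sub_le_iff]; constructor <;> linarith
  have hψ : |ψ₁ t - ψ₂ t| ≤ M := hM t ht
  calc |Gamma1 ψ₁ t - Gamma1 ψ₂ t|
      = |(ψ₁ t - ψ₂ t) + (sSup ((fun s => max (-ψ₁ s) 0) '' Icc 0 t) -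
          sSup ((fun s => max (-ψ₂ s) 0) '' Icc 0 t))| := by
        unfold Gamma1; ring_nf
    _ ≤ |ψ₁ t - ψ₂ t| + |sSup ((fun s => max (-ψ₁ s) 0) '' Icc 0 t) -
          sSup ((fun s => max (-ψ₂ s) 0) '' Icc 0 t)| := abs_add_le _ _
    _ ≤ M + M := add_le_add hψ hS
    _ = 2 * M := by ring
end

section
/- The one-dimensional Skorokhod map satisfies a comparison principle: if ψ₁, ψ₂ : [0,∞) → ℝ are continuous with ψ₁(0) = ψ₂(0) ≥ 0 and ψ₁(t) − ψ₁(s) ≥ ψ₂(t) − ψ₂(s) for all 0 ≤ s ≤ t, then Γ₁(ψ₁)(t) ≥ Γ₁(ψ₂)(t) for all t ≥ 0. -/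
/-!
The gap `ψ₁ - ψ₂` starts at `0` and is nondecreasing, so on `[0, t]` it lies in
`[0, ψ₁ t - ψ₂ t]`. Hence `max (-ψ₁ s) 0 ≤ max (-ψ₂ s) 0 ≤ max (-ψ₁ s) 0 + (ψ₁ t - ψ₂ t)`,
and taking suprema over `s ∈ [0, t]` and adding `ψ₂ t` gives `Γ₁(ψ₂)(t) ≤ Γ₁(ψ₁)(t)`.
-/

open Set

/-- If `f '' A` is unbounded then so is `g '' A`, and both suprema take the junk value `0`. -/
theorem sSup_image_le_sSup_image_add {α : Type*} {A : Set α} {f g : α → ℝ} {c : ℝ}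
    (hf : ∀ x ∈ A, 0 ≤ f x) (hc : 0 ≤ c) (hfg : ∀ x ∈ A, f x ≤ g x)
    (hgf : ∀ x ∈ A, g x ≤ f x + c) :
    sSup (g '' A) ≤ sSup (f '' A) + c := by
  by_cases hbdd : BddAbove (f '' A)
  · have hf_nonneg : 0 ≤ sSup (f '' A) := Real.sSup_nonneg (by
      rintro _ ⟨x, hx, rfl⟩
      exact hf x hx)
    refine Real.sSup_le ?_ (by linarith)
    rintro _ ⟨x, hx, rfl⟩
    linarith [hgf x hx, le_csSup hbdd (mem_image_of_mem f hx)]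
  · have hg_unbdd : ¬BddAbove (g '' A) := fun ⟨b, hb⟩ =>
      hbdd ⟨b, by
        rintro _ ⟨x, hx, rfl⟩
        exact (hfg x hx).trans (hb (mem_image_of_mem g hx))⟩
    rw [Real.sSup_of_not_bddAbove hbdd, Real.sSup_of_not_bddAbove hg_unbdd]
    linarith

theorem stmt5_general (ψ₁ ψ₂ : ℝ → ℝ)
    (h0 : ψ₁ 0 = ψ₂ 0)
    (hinc : ∀ s t : ℝ, 0 ≤ s → s ≤ t → ψ₂ t - ψ₂ s ≤ ψ₁ t - ψ₁ s) :
    ∀ t ≥ (0:ℝ), Gamma1 ψ₂ t ≤ Gamma1 ψ₁ t := by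
  intro t ht
  have hgap_nonneg : ∀ s ∈ Icc 0 t, 0 ≤ ψ₁ s - ψ₂ s := fun s hs => by
    linarith [hinc 0 s le_rfl hs.1]
  have hgap_le : ∀ s ∈ Icc 0 t, ψ₁ s - ψ₂ s ≤ ψ₁ t - ψ₂ t := fun s hs => by
    linarith [hinc s t hs.1 hs.2]
  have hsup : sSup ((fun s => max (-ψ₂ s) 0) '' Icc 0 t) ≤
      sSup ((fun s => max (-ψ₁ s) 0) '' Icc 0 t) + (ψ₁ t - ψ₂ t) := by
    refine sSup_image_le_sSup_image_add (fun _ _ => le_max_right _ _)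
      (hgap_nonneg t ⟨ht, le_rfl⟩) (fun s hs => ?_) (fun s hs => ?_)
    · exact max_le_max_right 0 (by linarith [hgap_nonneg s hs])
    · exact max_le (by linarith [le_max_left (-ψ₁ s) 0, hgap_le s hs])
        (by linarith [le_max_right (-ψ₁ s) 0, hgap_nonneg t ⟨ht, le_rfl⟩])
  unfold Gamma1
  linarith

/-- Comparison principle for the one-dimensional Skorokhod map: if `ψ₁` and `ψ₂`
start at the same nonnegative point and the increments of `ψ₁` dominate those
of `ψ₂`, then `Γ₁(ψ₁) ≥ Γ₁(ψ₂)` on `[0,∞)`. -/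
theorem stmt5 (ψ₁ ψ₂ : ℝ → ℝ) (h1 : Continuous ψ₁) (h2 : Continuous ψ₂)
    (h0 : ψ₁ 0 = ψ₂ 0) (h0nonneg : 0 ≤ ψ₂ 0)
    (hinc : ∀ s t : ℝ, 0 ≤ s → s ≤ t → ψ₂ t - ψ₂ s ≤ ψ₁ t - ψ₁ s) :
    ∀ t ≥ (0:ℝ), Gamma1 ψ₂ t ≤ Gamma1 ψ₁ t :=
  stmt5_general ψ₁ ψ₂ h0 hinc
end

section
/- If the ESM Γ̄ associated with (G, d(·)) is well-defined and Lipschitz continuous on C_G[0,∞) with constant K_T on [0,T], then the constraining term satisfies, for all 0 ≤ s < t ≤ T + s, |η(t) − η(s)| ≤ (K_T + 1) · sup_{u∈[0, t−s]} |ψ(s+u) − ψ(s)|. -/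
/-!
Restarting the problem at time `s` from `Γψ(s)` reduces the claim to the bound
`‖Γψ(a) - ψ(0)‖ ≤ K · sup_{[0,a]} ‖ψ - ψ(0)‖` for `a ≤ T`. The Lipschitz hypothesis only
controls `Γψ(a)` by the sup over all of `[0,T]`, so we first show that `Γ` is causal in the
required sense: holding a path at `ψ(0)` for a time `T - a` leaves `Γ` at `ψ(0)` during the hold
(Lipschitz comparison with the constant path) and afterwards, by the time-shift property, runs
`Γψ` with delay `T - a`. The delayed path only samples `ψ` on `[0,a]` up to time `T`.
-/

open Set

namespace SkorokhodMap

variable {E : Type*}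

def delay (ψ : ℝ → E) (d : ℝ) : ℝ → E :=
  fun u => ψ (max (u - d) 0)

section

variable {ψ : ℝ → E} {T : ℝ}

theorem delay_of_le {d u : ℝ} (hu : u ≤ d) : delay ψ d u = ψ 0 := by
  simp [delay, hu]

theorem delay_add {d u : ℝ} (hu : 0 ≤ u) : delay ψ d (d + u) = ψ u := by
  simp [delay, hu]

theorem mapsTo_max_sub_Icc {d : ℝ} (hd : d ≤ T) :
    MapsTo (fun v => max (v - d) 0) (Icc 0 T) (Icc 0 (T - d)) :=
  fun _ hv => ⟨le_max_right _ _, max_le (by linarith [hv.2]) (by linarith)⟩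

theorem continuous_delay [TopologicalSpace E] (hψ : Continuous ψ) (d : ℝ) :
    Continuous (delay ψ d) := by
  unfold delay; fun_prop

end

variable [NormedAddCommGroup E]

def LipschitzOnIcc (G : Set E) (Γ : (ℝ → E) → ℝ → E) (T K : ℝ) : Prop :=
  ∀ ψ₁ ψ₂ : ℝ → E, Continuous ψ₁ → Continuous ψ₂ → ψ₁ 0 ∈ G → ψ₂ 0 ∈ G → ∀ u ∈ Icc (0:ℝ) T,
    ‖Γ ψ₁ u - Γ ψ₂ u‖ ≤ K * sSup ((fun v => ‖ψ₁ v - ψ₂ v‖) '' Icc (0:ℝ) T)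

def FixesConstants (G : Set E) (Γ : (ℝ → E) → ℝ → E) : Prop :=
  ∀ x ∈ G, ∀ t : ℝ, Γ (fun _ => x) t = x

/-- The input path of the problem restarted at time `s` from the state `Γ ψ s`. -/
def restart (Γ : (ℝ → E) → ℝ → E) (ψ : ℝ → E) (s : ℝ) : ℝ → E :=
  fun u => Γ ψ s + ψ (s + u) - ψ s

def ShiftProperty (G : Set E) (Γ : (ℝ → E) → ℝ → E) : Prop :=
  ∀ ψ : ℝ → E, Continuous ψ → ψ 0 ∈ G → ∀ s ≥ (0:ℝ), ∀ t ≥ (0:ℝ),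
    Γ (restart Γ ψ s) t = Γ ψ (s + t)

variable {G : Set E} {Γ : (ℝ → E) → ℝ → E} {ψ : ℝ → E} {T K : ℝ}

theorem continuous_restart (hψ : Continuous ψ) (s : ℝ) : Continuous (restart Γ ψ s) := by
  unfold restart; fun_prop

@[simp]
theorem restart_zero (s : ℝ) : restart Γ ψ s 0 = Γ ψ s := by
  simp [restart]

theorem restart_sub_restart_zero (s u : ℝ) :
    restart Γ ψ s u - restart Γ ψ s 0 = ψ (s + u) - ψ s := by
  rw [restart_zero, restart]; abel

theorem LipschitzOnIcc.eqOn (hLip : LipschitzOnIcc G Γ T K) {ψ₁ ψ₂ : ℝ → E}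
    (hψ₁ : Continuous ψ₁) (hψ₂ : Continuous ψ₂) (h₁ : ψ₁ 0 ∈ G) (h₂ : ψ₂ 0 ∈ G)
    (h : EqOn ψ₁ ψ₂ (Icc 0 T)) : EqOn (Γ ψ₁) (Γ ψ₂) (Icc 0 T) := by
  intro u hu
  have hsup : sSup ((fun v => ‖ψ₁ v - ψ₂ v‖) '' Icc (0:ℝ) T) = 0 := by
    refine le_antisymm (Real.sSup_nonpos ?_) (Real.sSup_nonneg ?_)
    · rintro _ ⟨v, hv, rfl⟩; simp [h hv]
    · rintro _ ⟨v, -, rfl⟩; exact norm_nonneg _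
  have := hLip ψ₁ ψ₂ hψ₁ hψ₂ h₁ h₂ u hu
  rw [hsup, mul_zero] at this
  exact sub_eq_zero.mp (norm_le_zero_iff.mp this)

theorem apply_delay_of_mem_Icc (hLip : LipschitzOnIcc G Γ T K) (hConst : FixesConstants G Γ)
    (hψ : Continuous ψ) (hψ₀ : ψ 0 ∈ G) {u : ℝ} (hu : u ∈ Icc 0 T) : Γ (delay ψ T) u = ψ 0 := by
  have hT : 0 ≤ T := hu.1.trans hu.2
  have hdelay : EqOn (delay ψ T) (fun _ => ψ 0) (Icc 0 T) := fun _ hv => delay_of_le hv.2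
  rw [hLip.eqOn (continuous_delay hψ T) continuous_const (by rwa [delay_of_le hT]) hψ₀
    hdelay hu, hConst _ hψ₀]

theorem apply_delay_add (hLip : LipschitzOnIcc G Γ T K) (hConst : FixesConstants G Γ)
    (hψ : Continuous ψ) (hψ₀ : ψ 0 ∈ G) (hShift : ShiftProperty G Γ) {r : ℝ} (hr : r ∈ Icc 0 T) :
    Γ (delay ψ T) (T + r) = Γ ψ r := by
  have hT : 0 ≤ T := hr.1.trans hr.2
  have hΓT := apply_delay_of_mem_Icc hLip hConst hψ hψ₀ ⟨hT, le_rfl⟩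
  have hrestart : EqOn (restart Γ (delay ψ T) T) ψ (Icc 0 T) := fun v hv => by
    simp only [restart, hΓT, delay_add hv.1, delay_of_le le_rfl, add_sub_cancel_left]
  rw [← hShift _ (continuous_delay hψ T) (by rwa [delay_of_le hT]) T hT r hr.1,
    hLip.eqOn (continuous_restart (continuous_delay hψ T) T) hψ (by rwa [restart_zero, hΓT])
      hψ₀ hrestart hr]

theorem restart_delay {a : ℝ} (ha : a ≤ T) (hΓa : Γ (delay ψ T) a = ψ 0) :
    restart Γ (delay ψ T) a = delay ψ (T - a) := by
  funext v
  rw [restart, hΓa, delay_of_le ha, add_sub_cancel_left, delay, delay]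
  congr 2; ring

theorem apply_eq_apply_delay (hLip : LipschitzOnIcc G Γ T K) (hConst : FixesConstants G Γ)
    (hψ : Continuous ψ) (hψ₀ : ψ 0 ∈ G) (hShift : ShiftProperty G Γ) {a : ℝ} (ha : a ∈ Icc 0 T) :
    Γ ψ a = Γ (delay ψ (T - a)) T := by
  have hT : 0 ≤ T := ha.1.trans ha.2
  rw [← apply_delay_add hLip hConst hψ hψ₀ hShift ha,
    ← restart_delay ha.2 (apply_delay_of_mem_Icc hLip hConst hψ hψ₀ ha),
    hShift _ (continuous_delay hψ T) (by rwa [delay_of_le hT]) a ha.1 T hT, add_comm]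

theorem norm_apply_sub_le (hLip : LipschitzOnIcc G Γ T K) (hConst : FixesConstants G Γ)
    (hψ : Continuous ψ) (hψ₀ : ψ 0 ∈ G) (hK : 0 ≤ K) (hShift : ShiftProperty G Γ) {a : ℝ}
    (ha : a ∈ Icc 0 T) :
    ‖Γ ψ a - ψ 0‖ ≤ K * sSup ((fun u => ‖ψ u - ψ 0‖) '' Icc 0 a) := by
  have hT : 0 ≤ T := ha.1.trans ha.2
  have hbound := hLip _ _ (continuous_delay hψ (T - a)) continuous_const
    (by rwa [delay_of_le (by linarith [ha.2])]) hψ₀ T ⟨hT, le_rfl⟩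
  rw [← apply_eq_apply_delay hLip hConst hψ hψ₀ hShift ha, hConst _ hψ₀] at hbound
  refine hbound.trans (mul_le_mul_of_nonneg_left (csSup_le_csSup ?_ ?_ ?_) hK)
  · exact isCompact_Icc.bddAbove_image (by fun_prop)
  · exact (nonempty_Icc.mpr hT).image _
  · rintro _ ⟨v, hv, rfl⟩
    have hmaps := mapsTo_max_sub_Icc (d := T - a) (by linarith [ha.1]) hv
    rw [sub_sub_cancel] at hmaps
    exact ⟨_, hmaps, rfl⟩

end SkorokhodMap

open Set SkorokhodMap

theorem stmt11_general {J : ℕ} (G : Set (EuclideanSpace ℝ (Fin J)))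
    (Γ : (ℝ → EuclideanSpace ℝ (Fin J)) → ℝ → EuclideanSpace ℝ (Fin J))
    (T : ℝ) (K : ℝ) (hK : 0 ≤ K)
    (hLip : ∀ ψ₁ ψ₂ : ℝ → EuclideanSpace ℝ (Fin J), Continuous ψ₁ → Continuous ψ₂ →
      ψ₁ 0 ∈ G → ψ₂ 0 ∈ G → ∀ u ∈ Icc (0:ℝ) T,
        ‖Γ ψ₁ u - Γ ψ₂ u‖ ≤ K * sSup ((fun v => ‖ψ₁ v - ψ₂ v‖) '' Icc (0:ℝ) T))
    (hRange : ∀ ψ : ℝ → EuclideanSpace ℝ (Fin J), Continuous ψ → ψ 0 ∈ G →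
      ∀ t ≥ (0:ℝ), Γ ψ t ∈ G)
    (hConst : ∀ x ∈ G, ∀ t : ℝ, Γ (fun _ => x) t = x)
    (hShift : ∀ ψ : ℝ → EuclideanSpace ℝ (Fin J), Continuous ψ → ψ 0 ∈ G →
      ∀ s ≥ (0:ℝ), ∀ t ≥ (0:ℝ),
        Γ (fun u => Γ ψ s + ψ (s + u) - ψ s) t = Γ ψ (s + t)) :
    ∀ ψ : ℝ → EuclideanSpace ℝ (Fin J), Continuous ψ → ψ 0 ∈ G →
      ∀ s t : ℝ, 0 ≤ s → s < t → t ≤ T + s →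
        ‖(Γ ψ t - ψ t) - (Γ ψ s - ψ s)‖ ≤
          (K + 1) * sSup ((fun u => ‖ψ (s + u) - ψ s‖) '' Icc (0:ℝ) (t - s)) := by
  intro ψ hψ hψ₀ s t hs hst hts
  have ha : t - s ∈ Icc 0 T := ⟨by linarith, by linarith⟩
  have hrestart : Γ (restart Γ ψ s) (t - s) = Γ ψ t := by
    have := hShift ψ hψ hψ₀ s hs _ ha.1
    rw [add_sub_cancel] at this
    exact this
  have hΓ : ‖Γ ψ t - Γ ψ s‖ ≤ K * sSup ((fun u => ‖ψ (s + u) - ψ s‖) '' Icc 0 (t - s)) := by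
    have := norm_apply_sub_le (Γ := Γ) hLip hConst (continuous_restart hψ s)
      (by rw [restart_zero]; exact hRange ψ hψ hψ₀ s hs) hK hShift ha
    simp only [restart_sub_restart_zero] at this
    rwa [hrestart, restart_zero] at this
  have hψt : ‖ψ t - ψ s‖ ≤ sSup ((fun u => ‖ψ (s + u) - ψ s‖) '' Icc 0 (t - s)) :=
    le_csSup (isCompact_Icc.bddAbove_image (by fun_prop)) ⟨t - s, ⟨ha.1, le_rfl⟩, by simp⟩
  calc ‖(Γ ψ t - ψ t) - (Γ ψ s - ψ s)‖ = ‖(Γ ψ t - Γ ψ s) - (ψ t - ψ s)‖ := by abel_nf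
    _ ≤ ‖Γ ψ t - Γ ψ s‖ + ‖ψ t - ψ s‖ := norm_sub_le _ _
    _ ≤ _ := by linarith

/-- If the extended Skorokhod map `Γ` is well-defined and Lipschitz continuous with
constant `K` in the uniform norm on `[0,T]` (fixing constant paths in `G`, mapping
into `G`, and satisfying the ESP time-shift property), then its constraining term
`η = Γψ - ψ` satisfies, for all `0 ≤ s < t ≤ T + s`,
`‖η(t) - η(s)‖ ≤ (K + 1) · sup_{u ∈ [0, t-s]} ‖ψ(s+u) - ψ(s)‖`. -/
theorem stmt11 {J : ℕ} (G : Set (EuclideanSpace ℝ (Fin J)))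
    (Γ : (ℝ → EuclideanSpace ℝ (Fin J)) → ℝ → EuclideanSpace ℝ (Fin J))
    (T : ℝ) (hT : 0 < T) (K : ℝ) (hK : 0 ≤ K)
    (hLip : ∀ ψ₁ ψ₂ : ℝ → EuclideanSpace ℝ (Fin J), Continuous ψ₁ → Continuous ψ₂ →
      ψ₁ 0 ∈ G → ψ₂ 0 ∈ G → ∀ u ∈ Icc (0:ℝ) T,
        ‖Γ ψ₁ u - Γ ψ₂ u‖ ≤ K * sSup ((fun v => ‖ψ₁ v - ψ₂ v‖) '' Icc (0:ℝ) T))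
    (hRange : ∀ ψ : ℝ → EuclideanSpace ℝ (Fin J), Continuous ψ → ψ 0 ∈ G →
      ∀ t ≥ (0:ℝ), Γ ψ t ∈ G)
    (hConst : ∀ x ∈ G, ∀ t : ℝ, Γ (fun _ => x) t = x)
    (hShift : ∀ ψ : ℝ → EuclideanSpace ℝ (Fin J), Continuous ψ → ψ 0 ∈ G →
      ∀ s ≥ (0:ℝ), ∀ t ≥ (0:ℝ),
        Γ (fun u => Γ ψ s + ψ (s + u) - ψ s) t = Γ ψ (s + t)) :
    ∀ ψ : ℝ → EuclideanSpace ℝ (Fin J), Continuous ψ → ψ 0 ∈ G →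
      ∀ s t : ℝ, 0 ≤ s → s < t → t ≤ T + s →
        ‖(Γ ψ t - ψ t) - (Γ ψ s - ψ s)‖ ≤
          (K + 1) * sSup ((fun u => ‖ψ (s + u) - ψ s‖) '' Icc (0:ℝ) (t - s)) :=
  stmt11_general G Γ T K hK hLip hRange hConst hShift
end

section
/- The explicit extended Skorokhod map on the time-dependent interval [ℓ(·), r(·)], given by Ξ_{ℓ,r}(ψ)(t) = max( min(0, inf_{u∈[0,t]}(ψ(u) − ℓ(u))), sup_{s∈[0,t]} min( ψ(s) − r(s), inf_{u∈[s,t]}(ψ(u) − ℓ(u)) ) ), is jointly Lipschitz continuous: for two triples (ℓ₁, r₁, ψ₁) and (ℓ₂, r₂, ψ₂) of continuous functions on [0,T], sup_{t∈[0,T]} |Ξ_{ℓ₁,r₁}(ψ₁)(t) − Ξ_{ℓ₂,r₂}(ψ₂)(t)| is bounded by a constant times the sum of the uniform distances sup|ℓ₁−ℓ₂| + sup|r₁−r₂| + sup|ψ₁−ψ₂|. -/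
open Set

/-- The explicit extended Skorokhod map on the time-dependent interval `[ℓ(·), r(·)]`:
`Ξ_{ℓ,r}(ψ)(t) = max( min(0, inf_{u∈[0,t]}(ψ(u)-ℓ(u))),
  sup_{s∈[0,t]} min(ψ(s)-r(s), inf_{u∈[s,t]}(ψ(u)-ℓ(u))) )`. -/
noncomputable def Xi (l r ψ : ℝ → ℝ) (t : ℝ) : ℝ :=
  max (min 0 (sInf ((fun u => ψ u - l u) '' Icc 0 t)))
    (sSup ((fun s => min (ψ s - r s) (sInf ((fun u => ψ u - l u) '' Icc s t))) '' Icc 0 t))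

private lemma csInf_abs_le {f g : ℝ → ℝ} {S : Set ℝ} (hS : S.Nonempty)
    (hf : BddBelow (f '' S)) (hg : BddBelow (g '' S)) {ε : ℝ}
    (h : ∀ x ∈ S, |f x - g x| ≤ ε) : |sInf (f '' S) - sInf (g '' S)| ≤ ε := by
  have key : ∀ (p q : ℝ → ℝ), BddBelow (p '' S) → (∀ x ∈ S, |p x - q x| ≤ ε) →
      sInf (p '' S) - ε ≤ sInf (q '' S) := by
    intro p q hp hpq
    refine le_csInf (hS.image q) ?_
    rintro y ⟨x, hx, rfl⟩
    have h1 : sInf (p '' S) ≤ p x := csInf_le hp ⟨x, hx, rfl⟩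
    have h2 := abs_sub_le_iff.mp (hpq x hx)
    linarith [h2.1]
  have h1 := key f g hf h
  have h2 := key g f hg (fun x hx => by rw [abs_sub_comm]; exact h x hx)
  rw [abs_sub_le_iff]; constructor <;> linarith

private lemma csSup_abs_le {f g : ℝ → ℝ} {S : Set ℝ} (hS : S.Nonempty)
    (hf : BddAbove (f '' S)) (hg : BddAbove (g '' S)) {ε : ℝ}
    (h : ∀ x ∈ S, |f x - g x| ≤ ε) : |sSup (f '' S) - sSup (g '' S)| ≤ ε := by
  have key : ∀ (p q : ℝ → ℝ), BddAbove (q '' S) → (∀ x ∈ S, |p x - q x| ≤ ε) →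
      sSup (p '' S) ≤ sSup (q '' S) + ε := by
    intro p q hq hpq
    refine csSup_le (hS.image p) ?_
    rintro y ⟨x, hx, rfl⟩
    have h1 : q x ≤ sSup (q '' S) := le_csSup hq ⟨x, hx, rfl⟩
    have h2 := abs_sub_le_iff.mp (hpq x hx)
    linarith [h2.1]
  have h1 := key f g hg h
  have h2 := key g f hf (fun x hx => by rw [abs_sub_comm]; exact h x hx)
  rw [abs_sub_le_iff]; constructor <;> linarith

/-- The map `(ℓ, r, ψ) ↦ Ξ_{ℓ,r}(ψ)` is jointly Lipschitz continuous in the uniform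
norm on `[0,T]`: the uniform distance of the outputs is bounded by a constant times
the sum of the uniform distances of the inputs. -/
theorem stmt14 (T : ℝ) (hT : 0 < T) :
    ∃ C > (0:ℝ), ∀ l₁ r₁ ψ₁ l₂ r₂ ψ₂ : ℝ → ℝ,
      Continuous l₁ → Continuous r₁ → Continuous ψ₁ →
      Continuous l₂ → Continuous r₂ → Continuous ψ₂ →
      (∀ t : ℝ, l₁ t ≤ r₁ t) → (∀ t : ℝ, l₂ t ≤ r₂ t) →
      ψ₁ 0 ∈ Icc (l₁ 0) (r₁ 0) → ψ₂ 0 ∈ Icc (l₂ 0) (r₂ 0) →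
      ∀ t ∈ Icc (0:ℝ) T,
        |Xi l₁ r₁ ψ₁ t - Xi l₂ r₂ ψ₂ t| ≤
          C * (sSup ((fun s => |l₁ s - l₂ s|) '' Icc (0:ℝ) T) +
               sSup ((fun s => |r₁ s - r₂ s|) '' Icc (0:ℝ) T) +
               sSup ((fun s => |ψ₁ s - ψ₂ s|) '' Icc (0:ℝ) T)) := by
  refine ⟨1, one_pos, ?_⟩
  intro l₁ r₁ ψ₁ l₂ r₂ ψ₂ hl₁ hr₁ hψ₁ hl₂ hr₂ hψ₂ _ _ _ _ t ht
  set δl := sSup ((fun s => |l₁ s - l₂ s|) '' Icc (0:ℝ) T) with hδl_def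
  set δr := sSup ((fun s => |r₁ s - r₂ s|) '' Icc (0:ℝ) T) with hδr_def
  set δψ := sSup ((fun s => |ψ₁ s - ψ₂ s|) '' Icc (0:ℝ) T) with hδψ_def
  have h0T : (0:ℝ) ∈ Icc (0:ℝ) T := ⟨le_refl 0, hT.le⟩
  have bddl : BddAbove ((fun s => |l₁ s - l₂ s|) '' Icc (0:ℝ) T) :=
    (isCompact_Icc.image ((hl₁.sub hl₂).abs)).bddAbove
  have bddr : BddAbove ((fun s => |r₁ s - r₂ s|) '' Icc (0:ℝ) T) :=
    (isCompact_Icc.image ((hr₁.sub hr₂).abs)).bddAbove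
  have bddψ : BddAbove ((fun s => |ψ₁ s - ψ₂ s|) '' Icc (0:ℝ) T) :=
    (isCompact_Icc.image ((hψ₁.sub hψ₂).abs)).bddAbove
  have hδl : ∀ u ∈ Icc (0:ℝ) T, |l₁ u - l₂ u| ≤ δl := fun u hu => le_csSup bddl ⟨u, hu, rfl⟩
  have hδr : ∀ u ∈ Icc (0:ℝ) T, |r₁ u - r₂ u| ≤ δr := fun u hu => le_csSup bddr ⟨u, hu, rfl⟩
  have hδψ : ∀ u ∈ Icc (0:ℝ) T, |ψ₁ u - ψ₂ u| ≤ δψ := fun u hu => le_csSup bddψ ⟨u, hu, rfl⟩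
  have δl0 : 0 ≤ δl := le_trans (abs_nonneg _) (hδl 0 h0T)
  have δr0 : 0 ≤ δr := le_trans (abs_nonneg _) (hδr 0 h0T)
  have δψ0 : 0 ≤ δψ := le_trans (abs_nonneg _) (hδψ 0 h0T)
  set D := δl + δr + δψ with hD_def
  -- the difference functions
  set F₁ := fun u => ψ₁ u - l₁ u with hF₁
  set F₂ := fun u => ψ₂ u - l₂ u with hF₂
  have hF : ∀ u ∈ Icc (0:ℝ) T, |F₁ u - F₂ u| ≤ δψ + δl := by
    intro u hu
    have : F₁ u - F₂ u = (ψ₁ u - ψ₂ u) + -(l₁ u - l₂ u) := by simp [hF₁, hF₂]; ring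
    rw [this]
    calc |(ψ₁ u - ψ₂ u) + -(l₁ u - l₂ u)| ≤ |ψ₁ u - ψ₂ u| + |-(l₁ u - l₂ u)| := abs_add_le _ _
      _ ≤ δψ + δl := by rw [abs_neg]; exact add_le_add (hδψ u hu) (hδl u hu)
  have hG : ∀ u ∈ Icc (0:ℝ) T, |(ψ₁ u - r₁ u) - (ψ₂ u - r₂ u)| ≤ δψ + δr := by
    intro u hu
    have : (ψ₁ u - r₁ u) - (ψ₂ u - r₂ u) = (ψ₁ u - ψ₂ u) + -(r₁ u - r₂ u) := by ring
    rw [this]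
    calc |(ψ₁ u - ψ₂ u) + -(r₁ u - r₂ u)| ≤ |ψ₁ u - ψ₂ u| + |-(r₁ u - r₂ u)| := abs_add_le _ _
      _ ≤ δψ + δr := by rw [abs_neg]; exact add_le_add (hδψ u hu) (hδr u hu)
  obtain ⟨ht0, htT⟩ := ht
  -- first components
  have bddF₁ : ∀ s, BddBelow (F₁ '' Icc s t) := fun s => (isCompact_Icc.image (hψ₁.sub hl₁)).bddBelow
  have bddF₂ : ∀ s, BddBelow (F₂ '' Icc s t) := fun s => (isCompact_Icc.image (hψ₂.sub hl₂)).bddBelow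
  have hInf : ∀ s ∈ Icc (0:ℝ) t, |sInf (F₁ '' Icc s t) - sInf (F₂ '' Icc s t)| ≤ δψ + δl := by
    intro s hs
    refine csInf_abs_le (nonempty_Icc.2 hs.2) (bddF₁ s) (bddF₂ s) ?_
    intro u hu
    exact hF u ⟨le_trans hs.1 hu.1, le_trans hu.2 htT⟩
  have hA : |min 0 (sInf (F₁ '' Icc 0 t)) - min 0 (sInf (F₂ '' Icc 0 t))| ≤ D := by
    refine le_trans (abs_min_sub_min_le_max _ _ _ _) ?_
    refine max_le (by simpa using (by positivity : (0:ℝ) ≤ D)) ?_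
    refine le_trans (hInf 0 ⟨le_refl 0, ht0⟩) (by simp [hD_def]; linarith)
  -- second components
  set G₁ := fun s => min (ψ₁ s - r₁ s) (sInf (F₁ '' Icc s t)) with hG₁
  set G₂ := fun s => min (ψ₂ s - r₂ s) (sInf (F₂ '' Icc s t)) with hG₂
  have hGdiff : ∀ s ∈ Icc (0:ℝ) t, |G₁ s - G₂ s| ≤ D := by
    intro s hs
    refine le_trans (abs_min_sub_min_le_max _ _ _ _) (max_le ?_ ?_)
    · exact le_trans (hG s ⟨hs.1, le_trans hs.2 htT⟩) (by simp [hD_def]; linarith)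
    · exact le_trans (hInf s hs) (by simp [hD_def]; linarith)
  have bddG : ∀ (ψ r l : ℝ → ℝ), Continuous ψ → Continuous r →
      BddAbove ((fun s => min (ψ s - r s) (sInf ((fun u => ψ u - l u) '' Icc s t))) '' Icc (0:ℝ) t) := by
    intro ψ r l hψ hr
    obtain ⟨M, hM⟩ := (isCompact_Icc.image (hψ.sub hr)).bddAbove
    refine ⟨M, ?_⟩
    rintro y ⟨s, hs, rfl⟩
    exact le_trans (min_le_left _ _) (hM ⟨s, hs, rfl⟩)
  have hB : |sSup (G₁ '' Icc 0 t) - sSup (G₂ '' Icc 0 t)| ≤ D := by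
    refine csSup_abs_le (nonempty_Icc.2 ht0) ?_ ?_ hGdiff
    · exact bddG ψ₁ r₁ l₁ hψ₁ hr₁
    · exact bddG ψ₂ r₂ l₂ hψ₂ hr₂
  have hfinal : |Xi l₁ r₁ ψ₁ t - Xi l₂ r₂ ψ₂ t| ≤ D := by
    unfold Xi
    refine le_trans (abs_max_sub_max_le_max _ _ _ _) (max_le ?_ ?_)
    · exact hA
    · exact hB
  rw [one_mul]
  exact hfinal
end
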